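/- arXiv:math/0204172 — 2 statements merged into one kernel-verified Lean document; each statement's English description precedes it below -/
import Mathlib

section
/- Let d ≥ 3 and m an admissible Nakajima parameter matrix, τ := pos(P_m^{(d)}). For ε_1,…,ε_{d-1} ∈ {0,1} define the cone C_ε := pos( {e_1^∨} ∪ { ε_i e_{i+1}^∨ + (1-ε_i)(m_i - e_{i+1}^∨) : 1 ≤ i ≤ d-1 } ). Then the 2^{d-1} cones C_ε form a subdivision of τ^∨ into basic (unimodular) cones with respect to (ℤ^d)^∨: each C_ε is generated by a ℤ-basis of (ℤ^d)^∨, the union of all C_ε equals τ^∨, and the intersection of any two such cones C_ε ∩ C_{ε'} equals pos( {e_1^∨} ∪ { ε_{i-1} e_i^∨ + (1-ε_{i-1})(m_{i-1} - e_i^∨) : i ∈ {2,…,d}, ε_{i-1} = ε'_{i-1} } ), a common face of both. -/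
/-- Replace the `k`-th coordinate of `x` by `0`. -/
def coordZero {d : ℕ} (x : Fin d → ℝ) (k : ℕ) : Fin d → ℝ :=
  fun j => if (j : ℕ) = k then 0 else x j

/-- The `k`-th (0-based) coordinate of `x`, or `0` if out of range. -/
def coordN {d : ℕ} (x : Fin d → ℝ) (k : ℕ) : ℝ :=
  if h : k < d then x ⟨k, h⟩ else 0

/-- The pairing `⟨m_i, x⟩ = ∑_{l=1}^{i} m_{i,l} x_l` of the row `m_i` with the
first `i` coordinates of `x`. -/
def nakPairing {d : ℕ} (m : ℕ → ℕ → ℤ) (i : ℕ) (x : Fin d → ℝ) : ℝ :=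
  ∑ j ∈ Finset.univ.filter (fun j : Fin d => (j : ℕ) < i), (m i ((j : ℕ) + 1) : ℝ) * x j

/-- The inductively defined Nakajima polytopes `P_m^{(i)} ⊂ ℝ^d`:
`P_m^{(1)} = {e₁}` and
`P_m^{(i)} = { (x', x_i, 0,…,0) : (x',0,…,0) ∈ P_m^{(i-1)}, 0 ≤ x_i ≤ ⟨m_{i-1}, x'⟩ }`. -/
def nakP (d : ℕ) (m : ℕ → ℕ → ℤ) : ℕ → Set (Fin d → ℝ)
  | 0 => ∅
  | 1 => {fun j : Fin d => if (j : ℕ) = 0 then (1 : ℝ) else 0}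
  | i + 2 =>
      { x | coordZero x (i + 1) ∈ nakP d m (i + 1) ∧
        0 ≤ coordN x (i + 1) ∧ coordN x (i + 1) ≤ nakPairing m (i + 1) x }

/-- Admissibility of the parameter matrix `m`:
`⟨m_{i-1}, x⟩ ≥ 0` for all `x ∈ P_m^{(i-1)}`, `2 ≤ i ≤ d`. -/
def NakAdmissibleR (d : ℕ) (m : ℕ → ℕ → ℤ) : Prop :=
  ∀ i, 2 ≤ i → i ≤ d → ∀ x ∈ nakP d m (i - 1), 0 ≤ nakPairing m (i - 1) x

/-- The cone `τ = pos(P_m^{(d)})` over the Nakajima polytope. -/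
def nakConeTau (d : ℕ) (m : ℕ → ℕ → ℤ) : Set (Fin d → ℝ) :=
  { y | ∃ (r : ℝ) (x : Fin d → ℝ), 0 ≤ r ∧ x ∈ nakP d m d ∧ y = r • x }

/-- The generators of the cone `C_ε`: `e₁^∨`, and for `1 ≤ i ≤ d-1` the vector
`ε_i e_{i+1}^∨ + (1-ε_i)(m_i - e_{i+1}^∨)` (0-based row index `i`). -/
def nakGenZ (d : ℕ) (m : ℕ → ℕ → ℤ) (ε : ℕ → ℤ) (i j : Fin d) : ℤ :=
  if (i : ℕ) = 0 then (if (j : ℕ) = 0 then 1 else 0)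
  else ε (i : ℕ) * (if j = i then 1 else 0) +
    (1 - ε (i : ℕ)) * (m (i : ℕ) ((j : ℕ) + 1) - (if j = i then 1 else 0))

/-- The basic cone `C_ε = pos({e₁^∨} ∪ {ε_i e_{i+1}^∨ + (1-ε_i)(m_i - e_{i+1}^∨)})`. -/
def nakCε (d : ℕ) (m : ℕ → ℕ → ℤ) (ε : ℕ → ℤ) : Set (Fin d → ℝ) :=
  { y | ∃ a : Fin d → ℝ, (∀ i, 0 ≤ a i) ∧
      ∀ j : Fin d, y j = ∑ i : Fin d, a i * (nakGenZ d m ε i j : ℝ) }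

/-
The generator matrix of `C_ε` is lower triangular with diagonal entries `1` and `±1`. This gives
basicness, and it makes the coefficients of a point of `C_ε ∩ C_ε'` computable column by column
from the last one: a generator in which `ε` and `ε'` differ has diagonal entries of opposite
signs in the two matrices, so with nonnegative coefficients its coefficient must vanish.

For `τ^∨ ⊆ ⋃ C_ε`, peel off the last coordinate. If `y` is supported on the first `k + 1`
coordinates and nonnegative on `P^{(k+1)}`, subtract `|y_{k+1}|` times `e_{k+1}^∨` (if
`y_{k+1} ≥ 0`) or `m_k - e_{k+1}^∨` (if `y_{k+1} < 0`). What is left is supported on the first `k` coordinates and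
nonnegative on `P^{(k)}`, because `P^{(k+1)}` contains every `x ∈ P^{(k)}` lifted to height `0`
and to height `⟨m_k, x⟩`.
-/

namespace Matrix

lemma vecMul_eq_vecMul_of_row_eq {ι κ R : Type*} [Fintype ι] [NonUnitalNonAssocSemiring R]
    {G G' : Matrix ι κ R} {a : ι → R} (h : ∀ i, a i = 0 ∨ G i = G' i) :
    a ᵥ* G = a ᵥ* G' := by
  rw [vecMul_eq_sum, vecMul_eq_sum]
  exact Finset.sum_congr rfl fun i _ => by rcases h i with h | h <;> simp [h]

variable {ι R : Type*} [Fintype ι] [LinearOrder ι] [Field R] [LinearOrder R] [IsStrictOrderedRing R]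

lemma IsLowerTriangular.coeff_eq_of_vecMul_eq {G G' : Matrix ι ι R} (hG : G.IsLowerTriangular)
    (hG' : G'.IsLowerTriangular) (hrows : ∀ i, (G i = G' i ∧ G i i ≠ 0) ∨ G i i * G' i i < 0)
    {a b : ι → R} (ha : 0 ≤ a) (hb : 0 ≤ b) (hab : a ᵥ* G = b ᵥ* G') (i : ι) :
    a i = b i ∧ (G i ≠ G' i → a i = 0) := by
  induction i using WellFoundedGT.induction with
  | _ i ih =>
  have hdiag : a i * G i i = b i * G' i i := by
    have hsum : ∑ k, (a k * G k i - b k * G' k i) = 0 := by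
      rw [Finset.sum_sub_distrib, sub_eq_zero]
      exact congrFun hab i
    rwa [Finset.sum_eq_single i, sub_eq_zero] at hsum
    · intro k _ hki
      rcases hki.lt_or_gt with hlt | hgt
      · rw [hG (show OrderDual.toDual i < OrderDual.toDual k from hlt),
          hG' (show OrderDual.toDual i < OrderDual.toDual k from hlt)]
        ring
      · obtain ⟨hab_k, hrow_k⟩ := ih k hgt
        by_cases hrow : G k = G' k
        · rw [hab_k, hrow, sub_self]
        · rw [hrow_k hrow, ← hab_k, hrow_k hrow]
          ring
    · simp
  rcases hrows i with ⟨hrow, hne⟩ | hneg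
  · rw [hrow] at hdiag hne
    exact ⟨mul_right_cancel₀ hne hdiag, fun h => absurd hrow h⟩
  · have hne : G i i ≠ 0 := fun h => by simp [h] at hneg
    have hne' : G' i i ≠ 0 := fun h => by simp [h] at hneg
    have hsq : a i * (G i i * G i i) = b i * (G i i * G' i i) := by
      linear_combination G i i * hdiag
    have ha0 : a i * (G i i * G i i) = 0 :=
      le_antisymm (hsq ▸ mul_nonpos_of_nonneg_of_nonpos (hb i) hneg.le)
        (mul_nonneg (ha i) (mul_self_nonneg _))
    have ha0 : a i = 0 := by simpa [hne] using ha0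
    have hb0 : b i = 0 := by simpa [ha0, hne'] using hdiag
    exact ⟨ha0.trans hb0.symm, fun _ => ha0⟩

end Matrix

open Matrix

section Nakajima

variable {d : ℕ} {m : ℕ → ℕ → ℤ}

lemma mem_nakP_succ {k : ℕ} (hk : 1 ≤ k) {x : Fin d → ℝ} :
    x ∈ nakP d m (k + 1) ↔
      coordZero x k ∈ nakP d m k ∧ 0 ≤ coordN x k ∧ coordN x k ≤ nakPairing m k x := by
  obtain ⟨i, rfl⟩ := Nat.exists_eq_add_of_le' hk
  rfl

lemma coordN_val (x : Fin d → ℝ) (j : Fin d) : coordN x j = x j := by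
  simp [coordN]

lemma nakPairing_congr {i : ℕ} {x x' : Fin d → ℝ} (h : ∀ j : Fin d, (j : ℕ) < i → x j = x' j) :
    nakPairing m i x = nakPairing m i x' :=
  Finset.sum_congr rfl fun j hj => by rw [h j (Finset.mem_filter.1 hj).2]

lemma nakP_apply_of_le {k : ℕ} {x : Fin d → ℝ} (hx : x ∈ nakP d m k) {j : Fin d}
    (hj : k ≤ j) : x j = 0 := by
  induction k using nakP.induct generalizing x with
  | case1 => simp [nakP] at hx
  | case2 =>
    simp only [nakP, Set.mem_singleton_iff] at hx
    simp [hx]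
    omega
  | case3 i ih =>
    obtain ⟨hx, -⟩ := hx
    simpa [coordZero, show (j : ℕ) ≠ i + 1 by omega] using ih hx (by omega)

lemma nakP_apply_zero (hd : 0 < d) {k : ℕ} {x : Fin d → ℝ} (hx : x ∈ nakP d m k) :
    x ⟨0, hd⟩ = 1 := by
  induction k using nakP.induct generalizing x with
  | case1 => simp [nakP] at hx
  | case2 =>
    simp only [nakP, Set.mem_singleton_iff] at hx
    simp [hx]
  | case3 i ih =>
    obtain ⟨hx, -⟩ := hx
    simpa [coordZero] using ih hx

lemma nakP_apply_mem_Icc {k : ℕ} {x : Fin d → ℝ} (hx : x ∈ nakP d m k) {i : Fin d}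
    (hi : 1 ≤ (i : ℕ)) (hik : (i : ℕ) < k) : x i ∈ Set.Icc 0 (nakPairing m i x) := by
  induction k using nakP.induct generalizing x with
  | case1 => simp [nakP] at hx
  | case2 => omega
  | case3 k ih =>
    obtain ⟨hx, hx₀, hx₁⟩ := hx
    rcases (show (i : ℕ) < k + 1 ∨ (i : ℕ) = k + 1 by omega) with hlt | hik
    · have hagree : ∀ j : Fin d, (j : ℕ) < k + 1 → coordZero x (k + 1) j = x j := by
        intro j hj
        simp [coordZero, hj.ne]
      rw [← hagree i hlt, ← nakPairing_congr fun j hj => hagree j (hj.trans hlt)]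
      exact ih hx hlt
    · rw [← hik, coordN_val] at hx₀ hx₁
      exact ⟨hx₀, hik ▸ hx₁⟩

lemma add_single_mem_nakP {k : ℕ} (hk : 1 ≤ k) (hkd : k < d) {x : Fin d → ℝ}
    (hx : x ∈ nakP d m k) {t : ℝ} (ht₀ : 0 ≤ t) (ht : t ≤ nakPairing m k x) :
    x + Pi.single ⟨k, hkd⟩ t ∈ nakP d m (k + 1) := by
  have hxk : x ⟨k, hkd⟩ = 0 := nakP_apply_of_le hx le_rfl
  have hcoordZero : coordZero (x + Pi.single ⟨k, hkd⟩ t) k = x := by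
    ext j
    by_cases hj : (j : ℕ) = k
    · obtain rfl : j = ⟨k, hkd⟩ := Fin.ext hj
      simp [coordZero, hxk]
    · simp [coordZero, hj, Fin.ext_iff]
  have hcoordN : coordN (x + Pi.single ⟨k, hkd⟩ t) k = t := by
    simp [coordN, hkd, hxk]
  have hpairing : nakPairing m k (x + Pi.single ⟨k, hkd⟩ t) = nakPairing m k x :=
    nakPairing_congr fun j hj => by simp [Fin.ext_iff, hj.ne]
  rw [mem_nakP_succ hk, hcoordZero, hcoordN, hpairing]
  exact ⟨hx, ht₀, ht⟩

def nakGenR (d : ℕ) (m : ℕ → ℕ → ℤ) (ε : ℕ → ℤ) : Matrix (Fin d) (Fin d) ℝ :=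
  (Matrix.of (nakGenZ d m ε)).map (Int.castRingHom ℝ)

lemma mem_nakCε_iff {ε : ℕ → ℤ} {y : Fin d → ℝ} :
    y ∈ nakCε d m ε ↔ ∃ a : Fin d → ℝ, (∀ i, 0 ≤ a i) ∧ y = a ᵥ* nakGenR d m ε := by
  simp only [nakCε, Set.mem_ofPred_eq, funext_iff]
  rfl

lemma nakGenR_row_congr {ε ε' : ℕ → ℤ} {i : Fin d} (h : (i : ℕ) = 0 ∨ ε i = ε' i) :
    nakGenR d m ε i = nakGenR d m ε' i := by
  ext j
  rcases h with h | h <;> simp [nakGenR, nakGenZ, h]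

lemma nakGenR_row_zero (ε : ℕ → ℤ) (hd : 0 < d) :
    nakGenR d m ε ⟨0, hd⟩ = Pi.single ⟨0, hd⟩ 1 := by
  ext j
  simp [nakGenR, nakGenZ, Pi.single_apply, Fin.ext_iff]

lemma isLowerTriangular_nakGenZ (hm : ∀ i j, i < j → m i j = 0) (ε : ℕ → ℤ) :
    (Matrix.of (nakGenZ d m ε)).IsLowerTriangular := by
  intro i j (hij : i < j)
  have hj : (j : ℕ) ≠ 0 := by omega
  by_cases hi : (i : ℕ) = 0
  · simp [nakGenZ, hi, hj]
  · simp [nakGenZ, hi, hij.ne', hm i (j + 1) (by omega)]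

lemma isLowerTriangular_nakGenR (hm : ∀ i j, i < j → m i j = 0) (ε : ℕ → ℤ) :
    (nakGenR d m ε).IsLowerTriangular :=
  (isLowerTriangular_nakGenZ hm ε).map _

lemma nakGenZ_diag (hm : ∀ i j, i < j → m i j = 0) (ε : ℕ → ℤ) (i : Fin d) :
    nakGenZ d m ε i i = if (i : ℕ) = 0 then 1 else 2 * ε i - 1 := by
  by_cases hi : (i : ℕ) = 0
  · simp [nakGenZ, hi]
  · simp [nakGenZ, hi, hm i (i + 1) (by omega)]
    ring

lemma isUnit_nakGenZ_diag (hm : ∀ i j, i < j → m i j = 0) {ε : ℕ → ℤ}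
    (hε : ∀ i, ε i = 0 ∨ ε i = 1) (i : Fin d) : IsUnit (nakGenZ d m ε i i) := by
  rw [nakGenZ_diag hm, Int.isUnit_iff]
  split_ifs
  · exact Or.inl rfl
  · rcases hε i with h | h <;> simp [h]

lemma det_nakGenZ (hm : ∀ i j, i < j → m i j = 0) {ε : ℕ → ℤ} (hε : ∀ i, ε i = 0 ∨ ε i = 1) :
    (Matrix.of (nakGenZ d m ε)).det = 1 ∨ (Matrix.of (nakGenZ d m ε)).det = -1 := by
  rw [← Int.isUnit_iff, det_of_isLowerTriangular _ (isLowerTriangular_nakGenZ hm ε),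
    IsUnit.prod_univ_iff]
  exact isUnit_nakGenZ_diag hm hε

lemma nakPairing_eq_dotProduct (hm : ∀ i j, i < j → m i j = 0) (i : ℕ) (x : Fin d → ℝ) :
    nakPairing m i x = (fun j : Fin d => (m i (j + 1) : ℝ)) ⬝ᵥ x := by
  rw [nakPairing, Finset.sum_filter, dotProduct]
  refine Finset.sum_congr rfl fun j _ => ?_
  split_ifs with hj
  · rfl
  · simp [hm i (j + 1) (by omega)]

lemma nakGenR_row_of_ne_zero (ε : ℕ → ℤ) {i : Fin d} (hi : (i : ℕ) ≠ 0) :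
    nakGenR d m ε i = (ε i : ℝ) • Pi.single i 1 +
      (1 - (ε i : ℝ)) • ((fun j : Fin d => (m i (j + 1) : ℝ)) - Pi.single i 1) := by
  ext j
  by_cases hj : j = i <;> simp [nakGenR, nakGenZ, hi, hj]

lemma nakGenR_dotProduct (hm : ∀ i j, i < j → m i j = 0) (ε : ℕ → ℤ) {i : Fin d}
    (hi : (i : ℕ) ≠ 0) (x : Fin d → ℝ) :
    nakGenR d m ε i ⬝ᵥ x = ε i * x i + (1 - ε i) * (nakPairing m i x - x i) := by
  rw [nakGenR_row_of_ne_zero ε hi, nakPairing_eq_dotProduct hm, add_dotProduct, smul_dotProduct,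
    smul_dotProduct, sub_dotProduct, single_dotProduct, one_mul, smul_eq_mul, smul_eq_mul]

lemma nakGenR_apply_self (hm : ∀ i j, i < j → m i j = 0) (ε : ℕ → ℤ) (i : Fin d) :
    nakGenR d m ε i i = if (i : ℕ) = 0 then 1 else 2 * (ε i : ℝ) - 1 := by
  simp only [nakGenR, map_apply, of_apply, nakGenZ_diag hm, eq_intCast]
  split_ifs <;> push_cast <;> rfl

lemma nakGenR_diag_mul_neg (hm : ∀ i j, i < j → m i j = 0) {ε ε' : ℕ → ℤ}
    (hε : ∀ i, ε i = 0 ∨ ε i = 1) (hε' : ∀ i, ε' i = 0 ∨ ε' i = 1) {i : Fin d}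
    (hi : (i : ℕ) ≠ 0) (hne : ε i ≠ ε' i) : nakGenR d m ε i i * nakGenR d m ε' i i < 0 := by
  rw [nakGenR_apply_self hm, nakGenR_apply_self hm, if_neg hi]
  rcases hε i with h | h <;> rcases hε' i with h' | h' <;> simp_all

lemma nakGenR_row_eq_or_diag_mul_neg (hm : ∀ i j, i < j → m i j = 0) {ε ε' : ℕ → ℤ}
    (hε : ∀ i, ε i = 0 ∨ ε i = 1) (hε' : ∀ i, ε' i = 0 ∨ ε' i = 1) (i : Fin d) :
    (nakGenR d m ε i = nakGenR d m ε' i ∧ nakGenR d m ε i i ≠ 0) ∨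
      nakGenR d m ε i i * nakGenR d m ε' i i < 0 := by
  by_cases h : (i : ℕ) = 0 ∨ ε i = ε' i
  · refine Or.inl ⟨nakGenR_row_congr h, ?_⟩
    rw [nakGenR_apply_self hm]
    split_ifs
    · exact one_ne_zero
    · rcases hε i with h | h <;> norm_num [h]
  · rw [not_or] at h
    exact Or.inr (nakGenR_diag_mul_neg hm hε hε' h.1 h.2)

theorem nakCε_inter_nakCε (hm : ∀ i j, i < j → m i j = 0) {ε ε' : ℕ → ℤ}
    (hε : ∀ i, ε i = 0 ∨ ε i = 1) (hε' : ∀ i, ε' i = 0 ∨ ε' i = 1) :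
    nakCε d m ε ∩ nakCε d m ε' =
      { y | ∃ a : Fin d → ℝ, (∀ i, 0 ≤ a i) ∧
          (∀ i : Fin d, 1 ≤ (i : ℕ) → ε (i : ℕ) ≠ ε' (i : ℕ) → a i = 0) ∧
          ∀ j : Fin d, y j = ∑ i : Fin d, a i * (nakGenZ d m ε i j : ℝ) } := by
  ext y
  simp only [Set.mem_inter_iff, mem_nakCε_iff, Set.mem_ofPred_eq]
  constructor
  · rintro ⟨⟨a, ha, rfl⟩, b, hb, hab⟩
    refine ⟨a, ha, fun i hi hne => ?_, fun j => rfl⟩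
    refine ((isLowerTriangular_nakGenR hm ε).coeff_eq_of_vecMul_eq
      (isLowerTriangular_nakGenR hm ε') (nakGenR_row_eq_or_diag_mul_neg hm hε hε') ha hb hab
      i).2 fun hrow => ?_
    have hneg := nakGenR_diag_mul_neg hm hε hε' (by omega) hne
    rw [hrow] at hneg
    exact (mul_self_nonneg _).not_gt hneg
  · rintro ⟨a, ha, hzero, hy⟩
    obtain rfl : y = a ᵥ* nakGenR d m ε := funext hy
    refine ⟨⟨a, ha, rfl⟩, a, ha, vecMul_eq_vecMul_of_row_eq fun i => ?_⟩
    by_cases h : (i : ℕ) = 0 ∨ ε i = ε' i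
    · exact Or.inr (nakGenR_row_congr h)
    · rw [not_or] at h
      exact Or.inl (hzero i (by omega) h.2)

lemma nakGenR_mulVec_nonneg (hm : ∀ i j, i < j → m i j = 0) {ε : ℕ → ℤ}
    (hε : ∀ i, ε i = 0 ∨ ε i = 1) {x : Fin d → ℝ} (hx : x ∈ nakP d m d) :
    0 ≤ nakGenR d m ε *ᵥ x := by
  intro i
  change 0 ≤ nakGenR d m ε i ⬝ᵥ x
  by_cases hi : (i : ℕ) = 0
  · rw [show i = ⟨0, i.pos⟩ from Fin.ext hi, nakGenR_row_zero, single_dotProduct,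
      nakP_apply_zero _ hx]
    norm_num
  · rw [nakGenR_dotProduct hm ε hi]
    obtain ⟨hx₀, hx₁⟩ := nakP_apply_mem_Icc hx (by omega) i.isLt
    rcases hε i with h | h <;> simp [h] <;> linarith

lemma nakCε_subset_dual (hm : ∀ i j, i < j → m i j = 0) {ε : ℕ → ℤ}
    (hε : ∀ i, ε i = 0 ∨ ε i = 1) :
    nakCε d m ε ⊆ { y | ∀ z ∈ nakConeTau d m, 0 ≤ ∑ j : Fin d, y j * z j } := by
  rintro y hy _ ⟨r, x, hr, hx, rfl⟩
  obtain ⟨a, ha, rfl⟩ := mem_nakCε_iff.1 hy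
  change 0 ≤ (a ᵥ* nakGenR d m ε) ⬝ᵥ (r • x)
  rw [dotProduct_smul, ← dotProduct_mulVec, smul_eq_mul]
  exact mul_nonneg hr (dotProduct_nonneg_of_nonneg ha (nakGenR_mulVec_nonneg hm hε hx))

lemma nakGenR_dotProduct_of_mem (hm : ∀ i j, i < j → m i j = 0) (ε : ℕ → ℤ) {k : ℕ}
    (hk : 1 ≤ k) (hkd : k < d) {x : Fin d → ℝ} (hx : x ∈ nakP d m k) :
    nakGenR d m ε ⟨k, hkd⟩ ⬝ᵥ x = (1 - ε k) * nakPairing m k x := by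
  rw [nakGenR_dotProduct hm ε (by simp; omega), nakP_apply_of_le hx le_rfl]
  ring

lemma exists_sub_smul_nakGenR_nonneg (hm : ∀ i j, i < j → m i j = 0)
    (hadm : NakAdmissibleR d m) {k : ℕ} (hk : 1 ≤ k) (hkd : k < d) {y : Fin d → ℝ}
    (hy_supp : ∀ j : Fin d, k < (j : ℕ) → y j = 0) (hy : ∀ x ∈ nakP d m (k + 1), 0 ≤ y ⬝ᵥ x) :
    ∃ e : ℤ, (e = 0 ∨ e = 1) ∧ ∃ c : ℝ, 0 ≤ c ∧
      (∀ j : Fin d, k ≤ (j : ℕ) → (y - c • nakGenR d m (fun _ => e) ⟨k, hkd⟩) j = 0) ∧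
      ∀ x ∈ nakP d m k, 0 ≤ (y - c • nakGenR d m (fun _ => e) ⟨k, hkd⟩) ⬝ᵥ x := by
  set K : Fin d := ⟨k, hkd⟩
  set e : ℤ := if 0 ≤ y K then 1 else 0 with he_def
  have he : e = 0 ∨ e = 1 := by rw [he_def]; split_ifs <;> simp
  have habs : |y K| * (2 * e - 1) = y K ∧ |y K| * (1 - e) = -y K * (1 - e) := by
    rw [he_def]
    split_ifs with h
    · norm_num [abs_of_nonneg h]
    · simp [abs_of_neg (not_le.1 h)]
  refine ⟨e, he, |y K|, abs_nonneg _, fun j hj => ?_, fun x hx => ?_⟩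
  · rcases hj.lt_or_eq with hlt | heq
    · have hg := isLowerTriangular_nakGenR hm (fun _ => e)
        (show OrderDual.toDual j < OrderDual.toDual K from hlt)
      simp [hy_supp j hlt, hg]
    · obtain rfl : j = K := Fin.ext heq.symm
      simp [nakGenR_apply_self hm, show k ≠ 0 by omega, habs.1, K]
  · have hs : 0 ≤ nakPairing m k x := by
      simpa using hadm (k + 1) (by omega) (by omega) x (by simpa using hx)
    have ht : 0 ≤ 1 - (e : ℝ) ∧ 1 - (e : ℝ) ≤ 1 := by rcases he with h | h <;> simp [h]
    have hmem := add_single_mem_nakP hk hkd hx (t := (1 - e) * nakPairing m k x)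
      (mul_nonneg ht.1 hs) (mul_le_of_le_one_left hs ht.2)
    calc 0 ≤ y ⬝ᵥ (x + Pi.single K ((1 - e) * nakPairing m k x)) := hy _ hmem
      _ = (y - |y K| • nakGenR d m (fun _ => e) K) ⬝ᵥ x := by
        rw [dotProduct_add, dotProduct_single, sub_dotProduct, smul_dotProduct,
          nakGenR_dotProduct_of_mem hm _ hk hkd hx, smul_eq_mul]
        linear_combination (nakPairing m k x) * habs.2

lemma vecMul_nakGenR_update (ε : ℕ → ℤ) {k : ℕ} (hkd : k < d) (e : ℤ) {a : Fin d → ℝ}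
    (ha : ∀ i : Fin d, k ≤ (i : ℕ) → a i = 0) (c : ℝ) :
    (a + Pi.single ⟨k, hkd⟩ c) ᵥ* nakGenR d m (Function.update ε k e) =
      a ᵥ* nakGenR d m ε + c • nakGenR d m (fun _ => e) ⟨k, hkd⟩ := by
  rw [add_vecMul, single_vecMul]
  congr 1
  · refine vecMul_eq_vecMul_of_row_eq fun i => ?_
    by_cases hi : (i : ℕ) = k
    · exact Or.inl (ha i hi.ge)
    · exact Or.inr (nakGenR_row_congr (Or.inr (Function.update_of_ne hi _ _)))
  · exact congrArg _ (nakGenR_row_congr (Or.inr (by simp)))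

lemma single_mem_nakP_one (hd : 0 < d) : Pi.single ⟨0, hd⟩ 1 ∈ nakP d m 1 := by
  ext j
  simp [Pi.single_apply, Fin.ext_iff]

lemma exists_nakCε_of_nonneg_on_nakP (hm : ∀ i j, i < j → m i j = 0)
    (hadm : NakAdmissibleR d m) {k : ℕ} (hk : 1 ≤ k) (hkd : k ≤ d) {y : Fin d → ℝ}
    (hy_supp : ∀ j : Fin d, k ≤ (j : ℕ) → y j = 0) (hy : ∀ x ∈ nakP d m k, 0 ≤ y ⬝ᵥ x) :
    ∃ ε : ℕ → ℤ, (∀ i, ε i = 0 ∨ ε i = 1) ∧ ∃ a : Fin d → ℝ, (∀ i, 0 ≤ a i) ∧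
      (∀ i : Fin d, k ≤ (i : ℕ) → a i = 0) ∧ y = a ᵥ* nakGenR d m ε := by
  induction k, hk using Nat.le_induction generalizing y with
  | base =>
    have hd : 0 < d := hkd
    have hy₀ : 0 ≤ y ⟨0, hd⟩ := by simpa using hy _ (single_mem_nakP_one hd)
    refine ⟨0, fun _ => Or.inl rfl, Pi.single ⟨0, hd⟩ (y ⟨0, hd⟩), ?_, ?_, ?_⟩
    · intro i
      by_cases hi : i = ⟨0, hd⟩ <;> simp [hi, hy₀]
    · intro i hi
      simp [Fin.ext_iff, show (i : ℕ) ≠ 0 by omega]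
    · ext j
      by_cases hj : (j : ℕ) = 0
      · obtain rfl : j = ⟨0, hd⟩ := Fin.ext hj
        simp [nakGenR_row_zero]
      · simp [nakGenR_row_zero, Fin.ext_iff, hj, hy_supp j (by omega)]
  | succ k hk ih =>
    obtain ⟨e, he, c, hc, hsupp, hnonneg⟩ := exists_sub_smul_nakGenR_nonneg hm hadm hk hkd
      (fun j hj => hy_supp j hj) hy
    obtain ⟨ε, hε, a, ha, ha_supp, hrep⟩ := ih (by omega) hsupp hnonneg
    refine ⟨Function.update ε k e, fun i => ?_, a + Pi.single ⟨k, hkd⟩ c,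
      fun i => add_nonneg (ha i) (by rw [Pi.single_apply]; split_ifs <;> simp [hc]),
      fun i hi => ?_, ?_⟩
    · by_cases hi : i = k <;> simp [hi, he, hε i]
    · simp [Fin.ext_iff, ha_supp i (by omega), show (i : ℕ) ≠ k by omega]
    · rw [vecMul_nakGenR_update ε hkd e ha_supp c, ← hrep, sub_add_cancel]

theorem union_nakCε_eq_dual (hd : 1 ≤ d) (hm : ∀ i j, i < j → m i j = 0)
    (hadm : NakAdmissibleR d m) :
    { y : Fin d → ℝ | ∃ ε : ℕ → ℤ, (∀ i, ε i = 0 ∨ ε i = 1) ∧ y ∈ nakCε d m ε } =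
      { y : Fin d → ℝ | ∀ z ∈ nakConeTau d m, 0 ≤ ∑ j : Fin d, y j * z j } := by
  refine Set.Subset.antisymm (fun y ⟨ε, hε, hy⟩ => nakCε_subset_dual hm hε hy) fun y hy => ?_
  obtain ⟨ε, hε, a, ha, -, hrep⟩ := exists_nakCε_of_nonneg_on_nakP hm hadm hd le_rfl
    (fun j hj => absurd j.isLt (by omega))
    (fun x hx => hy x ⟨1, x, zero_le_one, hx, (one_smul ℝ x).symm⟩)
  exact ⟨ε, hε, mem_nakCε_iff.2 ⟨a, ha, hrep⟩⟩

end Nakajima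

theorem stmt15 (d : ℕ) (hd : 3 ≤ d) (m : ℕ → ℕ → ℤ)
    -- lower-triangularity: `m i j = 0` for `j > i` (1-based indices)
    (hm : ∀ i j, i < j → m i j = 0)
    (hadm : NakAdmissibleR d m) :
    -- each `C_ε` is basic w.r.t. `(ℤ^d)^∨`: its generators form a ℤ-basis (determinant ±1) …
    (∀ ε : ℕ → ℤ, (∀ i, ε i = 0 ∨ ε i = 1) →
      (Matrix.of (nakGenZ d m ε)).det = 1 ∨ (Matrix.of (nakGenZ d m ε)).det = -1) ∧
    -- … the union of the cones `C_ε` is the dual cone `τ^∨` …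
    { y : Fin d → ℝ | ∃ ε : ℕ → ℤ, (∀ i, ε i = 0 ∨ ε i = 1) ∧ y ∈ nakCε d m ε } =
      { y : Fin d → ℝ | ∀ z ∈ nakConeTau d m, 0 ≤ ∑ j : Fin d, y j * z j } ∧
    -- … and the intersection of two of them is the common face spanned by the
    -- generators with matching `ε`-entries
    (∀ ε ε' : ℕ → ℤ, (∀ i, ε i = 0 ∨ ε i = 1) → (∀ i, ε' i = 0 ∨ ε' i = 1) →
      nakCε d m ε ∩ nakCε d m ε' =
        { y | ∃ a : Fin d → ℝ, (∀ i, 0 ≤ a i) ∧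
            (∀ i : Fin d, 1 ≤ (i : ℕ) → ε (i : ℕ) ≠ ε' (i : ℕ) → a i = 0) ∧
            ∀ j : Fin d, y j = ∑ i : Fin d, a i * (nakGenZ d m ε i j : ℝ) }) :=
  ⟨fun _ hε => det_nakGenZ hm hε, union_nakCε_eq_dual (by omega) hm hadm,
    fun _ _ hε hε' => nakCε_inter_nakCε hm hε hε'⟩
end

section
/- Let d ≥ 3 and m an admissible Nakajima parameter matrix, τ := pos(P_m^{(d)}). Then the set L := {e_1^∨} ∪ { e_k^∨, m_{k-1} - e_k^∨ : 2 ≤ k ≤ d } generates the additive semigroup τ^∨ ∩ (ℤ^d)^∨: every lattice point of the dual cone τ^∨ is a non-negative integer combination of the elements of L. -/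
/-- The list `L = {e₁^∨} ∪ {e_k^∨, m_{k-1} - e_k^∨ : 2 ≤ k ≤ d}` of `2d-1` vectors. -/
def LvecZ (d : ℕ) (m : ℕ → ℕ → ℤ) (i : Fin (2 * d - 1)) (j : Fin d) : ℤ :=
  if (i : ℕ) < d then (if (j : ℕ) = (i : ℕ) then 1 else 0)
  else m ((i : ℕ) - d + 1) ((j : ℕ) + 1) - (if (j : ℕ) = (i : ℕ) - d + 1 then 1 else 0)


/-!
Induction on the number `k` of coordinates a lattice functional `y` may use. If `y` is
nonnegative on `P^{(k)}` and `c = y_k`, we remove one generator of `L` so that the remaining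
functional uses only `k - 1` coordinates and is nonnegative on `P^{(k-1)}`. For `c ≥ 0` remove
`c • e_k^∨`: `P^{(k-1)}` is the face `x_k = 0` of `P^{(k)}`. For `c < 0` remove
`(-c) • (m_{k-1} - e_k^∨)`: on `x ∈ P^{(k-1)}` the remainder takes the value of `y` at the
point `(x, ⟨m_{k-1}, x⟩)` of the opposite face, and its `k`-th coordinate vanishes because
`m_{k-1,k} = 0`.
-/

def intDot {d : ℕ} (y : Fin d → ℤ) (x : Fin d → ℝ) : ℝ :=
  ∑ j, (y j : ℝ) * x j

section intDot

variable {d : ℕ}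

@[simp]
lemma intDot_add_left (y y' : Fin d → ℤ) (x : Fin d → ℝ) :
    intDot (y + y') x = intDot y x + intDot y' x := by
  simp [intDot, add_mul, Finset.sum_add_distrib]

@[simp]
lemma intDot_sub_left (y y' : Fin d → ℤ) (x : Fin d → ℝ) :
    intDot (y - y') x = intDot y x - intDot y' x := by
  simp [intDot, sub_mul, Finset.sum_sub_distrib]

@[simp]
lemma intDot_smul_left (c : ℤ) (y : Fin d → ℤ) (x : Fin d → ℝ) :
    intDot (c • y) x = c * intDot y x := by
  simp [intDot, Finset.mul_sum, mul_assoc]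

@[simp]
lemma intDot_single_left (k : Fin d) (x : Fin d → ℝ) :
    intDot (Pi.single k 1) x = x k := by
  simp [intDot, Pi.single_apply]

@[simp]
lemma intDot_add_right (y : Fin d → ℤ) (x x' : Fin d → ℝ) :
    intDot y (x + x') = intDot y x + intDot y x' := by
  simp [intDot, mul_add, Finset.sum_add_distrib]

@[simp]
lemma intDot_single_right (y : Fin d → ℤ) (k : Fin d) (t : ℝ) :
    intDot y (Pi.single k t) = y k * t := by
  simp [intDot, Pi.single_apply]

end intDot

def nakRow (d : ℕ) (m : ℕ → ℕ → ℤ) (i : ℕ) : Fin d → ℤ :=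
  fun j => m i (j + 1)

lemma nakPairing_eq_intDot {d : ℕ} {m : ℕ → ℕ → ℤ} (hm : ∀ i j, i < j → m i j = 0)
    (i : ℕ) (x : Fin d → ℝ) : nakPairing m i x = intDot (nakRow d m i) x := by
  rw [nakPairing, Finset.sum_filter, intDot]
  refine Finset.sum_congr rfl fun j _ => ?_
  split_ifs with hj
  · rfl
  · simp [nakRow, hm i (j + 1) (by omega)]

section nakP

variable {d : ℕ} {m : ℕ → ℕ → ℤ}

lemma nakP_apply_eq_zero : ∀ {n : ℕ} {x : Fin d → ℝ}, x ∈ nakP d m n →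
    ∀ {j : Fin d}, n ≤ j → x j = 0
  | 0, x, hx, _, _ => absurd hx (Set.notMem_empty x)
  | 1, x, hx, j, hj => by
    rw [nakP, Set.mem_singleton_iff] at hx
    simp [hx, show (j : ℕ) ≠ 0 by omega]
  | n + 2, x, hx, j, hj => by
    simpa [coordZero, show (j : ℕ) ≠ n + 1 by omega] using
      nakP_apply_eq_zero hx.1 (j := j) (by omega)

lemma add_single_mem_nakP_succ {n : ℕ} (hn : n + 1 < d) {x : Fin d → ℝ}
    (hx : x ∈ nakP d m (n + 1)) {t : ℝ} (ht₀ : 0 ≤ t) (ht : t ≤ nakPairing m (n + 1) x) :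
    x + Pi.single ⟨n + 1, hn⟩ t ∈ nakP d m (n + 2) := by
  have hxk : x ⟨n + 1, hn⟩ = 0 := nakP_apply_eq_zero hx le_rfl
  have hzero : coordZero (x + Pi.single ⟨n + 1, hn⟩ t) (n + 1) = x := by
    funext j
    by_cases hj : (j : ℕ) = n + 1
    · have : j = ⟨n + 1, hn⟩ := Fin.ext hj
      subst this
      simp [coordZero, hxk]
    · simp [coordZero, hj, Fin.ext_iff]
  have hcoord : coordN (x + Pi.single ⟨n + 1, hn⟩ t) (n + 1) = t := by
    simp [coordN, hn, hxk]
  have hpair : nakPairing m (n + 1) (x + Pi.single ⟨n + 1, hn⟩ t) = nakPairing m (n + 1) x := by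
    refine Finset.sum_congr rfl fun j hj => ?_
    have hj : (j : ℕ) < n + 1 := (Finset.mem_filter.1 hj).2
    simp [Fin.ext_iff, hj.ne]
  refine ⟨?_, ?_, ?_⟩
  · rwa [hzero]
  · rwa [hcoord]
  · rwa [hcoord, hpair]

end nakP

def nakLMonoid (d : ℕ) (m : ℕ → ℕ → ℤ) : AddSubmonoid (Fin d → ℤ) :=
  AddSubmonoid.closure (Set.range (LvecZ d m))

section nakLMonoid

variable {d : ℕ} {m : ℕ → ℕ → ℤ}

lemma single_mem_nakLMonoid (k : Fin d) : Pi.single k 1 ∈ nakLMonoid d m := by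
  refine AddSubmonoid.subset_closure ⟨⟨k, by omega⟩, funext fun j => ?_⟩
  simp [LvecZ, Pi.single_apply, Fin.ext_iff]

lemma nakRow_sub_single_mem_nakLMonoid {k : ℕ} (hk : k + 1 < d) :
    nakRow d m (k + 1) - Pi.single ⟨k + 1, hk⟩ 1 ∈ nakLMonoid d m := by
  refine AddSubmonoid.subset_closure ⟨⟨d + k, by omega⟩, funext fun j => ?_⟩
  simp [LvecZ, nakRow, Pi.single_apply, Fin.ext_iff]

lemma mem_nakLMonoid_of_nonneg_on_nakP_one (hd : 0 < d) {y : Fin d → ℤ}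
    (hy : ∀ j : Fin d, 1 ≤ (j : ℕ) → y j = 0) (hdual : ∀ x ∈ nakP d m 1, 0 ≤ intDot y x) :
    y ∈ nakLMonoid d m := by
  set k : Fin d := ⟨0, hd⟩
  have he : Pi.single k 1 ∈ nakP d m 1 := by
    simp only [nakP, Set.mem_singleton_iff]
    funext j
    simp [Pi.single_apply, k, Fin.ext_iff]
  have hyk : 0 ≤ y k := by exact_mod_cast (by simpa using hdual _ he)
  have hy_eq : y = (y k).toNat • Pi.single k 1 := by
    funext j
    by_cases hj : j = k
    · simp [hj, hyk]
    · simp [hj, hy j (by simpa [k, Fin.ext_iff, Nat.one_le_iff_ne_zero] using hj)]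
  rw [hy_eq]
  exact nsmul_mem (single_mem_nakLMonoid k) _

end nakLMonoid

section induction

variable {d : ℕ} {m : ℕ → ℕ → ℤ}

lemma mem_nakLMonoid_of_nonneg_on_nakP_succ (hm : ∀ i j, i < j → m i j = 0)
    (hadm : NakAdmissibleR d m) {n : ℕ} (hn : n + 1 < d)
    (ih : ∀ y : Fin d → ℤ, (∀ j : Fin d, n + 1 ≤ (j : ℕ) → y j = 0) →
      (∀ x ∈ nakP d m (n + 1), 0 ≤ intDot y x) → y ∈ nakLMonoid d m)
    {y : Fin d → ℤ} (hy : ∀ j : Fin d, n + 2 ≤ (j : ℕ) → y j = 0)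
    (hdual : ∀ x ∈ nakP d m (n + 2), 0 ≤ intDot y x) :
    y ∈ nakLMonoid d m := by
  have hpair : ∀ x ∈ nakP d m (n + 1), 0 ≤ nakPairing m (n + 1) x :=
    hadm (n + 2) (by omega) (by omega)
  set k : Fin d := ⟨n + 1, hn⟩
  rcases le_or_gt 0 (y k) with hc | hc
  · have hy' : y - y k • Pi.single k 1 ∈ nakLMonoid d m := by
      refine ih _ (fun j hj => ?_) (fun x hx => ?_)
      · by_cases hjk : j = k
        · simp [hjk]
        · have : n + 2 ≤ (j : ℕ) := by simp [k, Fin.ext_iff] at hjk; omega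
          simp [hjk, hy j this]
      · have hxk : x k = 0 := nakP_apply_eq_zero hx le_rfl
        simpa only [intDot_sub_left, intDot_smul_left, intDot_single_left, hxk, mul_zero,
          sub_zero, Pi.single_zero, add_zero] using
          hdual _ (add_single_mem_nakP_succ hn hx le_rfl (hpair x hx))
    have hy_eq : y = (y - y k • Pi.single k 1) + (y k).toNat • Pi.single k 1 := by
      rw [← natCast_zsmul, Int.toNat_of_nonneg hc, sub_add_cancel]
    rw [hy_eq]
    exact add_mem hy' (nsmul_mem (single_mem_nakLMonoid k) _)
  · set w : Fin d → ℤ := nakRow d m (n + 1) - Pi.single k 1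
    have hy' : y + y k • w ∈ nakLMonoid d m := by
      refine ih _ (fun j hj => ?_) (fun x hx => ?_)
      · by_cases hjk : j = k
        · simp [hjk, w, nakRow, k, hm (n + 1) (n + 2) (by omega)]
        · have : n + 2 ≤ (j : ℕ) := by simp [k, Fin.ext_iff] at hjk; omega
          simp [hjk, w, nakRow, hy j this, hm (n + 1) (j + 1) (by omega)]
      · have hxk : x k = 0 := nakP_apply_eq_zero hx le_rfl
        have := hdual _ (add_single_mem_nakP_succ hn hx (hpair x hx) le_rfl)
        simpa only [w, intDot_add_left, intDot_smul_left, intDot_sub_left, intDot_single_left,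
          hxk, sub_zero, intDot_add_right, intDot_single_right, nakPairing_eq_intDot hm] using this
    have hy_eq : y = (y + y k • w) + (-y k).toNat • w := by
      rw [← natCast_zsmul, Int.toNat_of_nonneg (by omega), neg_smul, add_neg_cancel_right]
    rw [hy_eq]
    exact add_mem hy' (nsmul_mem (nakRow_sub_single_mem_nakLMonoid hn) _)

lemma mem_nakLMonoid_of_nonneg_on_nakP (hm : ∀ i j, i < j → m i j = 0)
    (hadm : NakAdmissibleR d m) :
    ∀ n, n + 1 ≤ d → ∀ y : Fin d → ℤ, (∀ j : Fin d, n + 1 ≤ (j : ℕ) → y j = 0) →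
      (∀ x ∈ nakP d m (n + 1), 0 ≤ intDot y x) → y ∈ nakLMonoid d m
  | 0, hd, _, hy, hdual => mem_nakLMonoid_of_nonneg_on_nakP_one hd hy hdual
  | n + 1, hn, _, hy, hdual => mem_nakLMonoid_of_nonneg_on_nakP_succ hm hadm hn
      (mem_nakLMonoid_of_nonneg_on_nakP hm hadm n (by omega)) hy hdual

end induction

theorem stmt16_general (d : ℕ) (m : ℕ → ℕ → ℤ)
    -- lower-triangularity: `m i j = 0` for `j > i` (1-based indices)
    (hm : ∀ i j, i < j → m i j = 0)
    (hadm : NakAdmissibleR d m) :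
    -- every lattice point of `τ^∨` is a non-negative integer combination of `L`
    ∀ y : Fin d → ℤ,
      (∀ z ∈ nakConeTau d m, 0 ≤ ∑ j : Fin d, (y j : ℝ) * z j) →
      ∃ a : Fin (2 * d - 1) → ℕ,
        ∀ j : Fin d, y j = ∑ i : Fin (2 * d - 1), (a i : ℤ) * LvecZ d m i j := by
  intro y hy
  have hmem : y ∈ nakLMonoid d m := by
    rcases Nat.eq_zero_or_pos d with rfl | hd
    · exact Subsingleton.elim 0 y ▸ zero_mem _
    obtain ⟨n, rfl⟩ := Nat.exists_eq_succ_of_ne_zero hd.ne'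
    exact mem_nakLMonoid_of_nonneg_on_nakP hm hadm n le_rfl y
      (fun j hj => absurd j.isLt (by omega))
      (fun x hx => hy x ⟨1, x, zero_le_one, hx, (one_smul ℝ x).symm⟩)
  obtain ⟨a, ha⟩ := AddSubmonoid.exists_of_mem_closure_range _ _ hmem
  exact ⟨a, fun j => by simp [ha, Finset.sum_apply]⟩

theorem stmt16 (d : ℕ) (hd : 3 ≤ d) (m : ℕ → ℕ → ℤ)
    -- lower-triangularity: `m i j = 0` for `j > i` (1-based indices)
    (hm : ∀ i j, i < j → m i j = 0)
    (hadm : NakAdmissibleR d m) :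
    -- every lattice point of `τ^∨` is a non-negative integer combination of `L`
    ∀ y : Fin d → ℤ,
      (∀ z ∈ nakConeTau d m, 0 ≤ ∑ j : Fin d, (y j : ℝ) * z j) →
      ∃ a : Fin (2 * d - 1) → ℕ,
        ∀ j : Fin d, y j = ∑ i : Fin (2 * d - 1), (a i : ℤ) * LvecZ d m i j :=
  stmt16_general d m hm hadm
end
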